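/- Let Θ be an m×n matrix, let T ⊂ {1,…,n} with |T| = k, and suppose there is a (δ/14)-net W of the unit ball of the coordinate subspace ℝ^T such that (1 − δ/√2)‖w‖² ≤ ‖Θw‖² ≤ (1 + δ/√2)‖w‖² for all w ∈ W. Then (1−δ)‖s‖² ≤ ‖Θs‖² ≤ (1+δ)‖s‖² for all s supported on T. -/

import Mathlib

/-!
Let `M` be the norm of `Θ` restricted to `ℝ^T`. Approximating a unit vector `x ∈ ℝ^T` by a net
point `w` with `‖x - w‖ ≤ ε` gives `‖Θx‖ ≤ ‖Θw‖ + εM`, hence `M ≤ √(1 + δ/√2) / (1 - ε)`, and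
`‖Θx‖ ≥ ‖Θw‖ - εM ≥ √(1 - δ/√2) (1 - ε) - εM`. For `ε = δ/14` the first bound gives
`M ≤ √(1 + δ)`, and then the second is at least `√(1 - δ)`; both are elementary inequalities in `δ`.
-/

open Matrix

namespace ContinuousLinearMap

variable {E F : Type*} [NormedAddCommGroup E] [NormedSpace ℝ E] [NormedAddCommGroup F]
  [NormedSpace ℝ F] {A : E →L[ℝ] F} {W : Set E} {ε : ℝ}

theorem opNorm_le_of_net {b : ℝ} (hε0 : 0 ≤ ε) (hε1 : ε < 1) (hb : 0 ≤ b)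
    (hnet : ∀ x, ‖x‖ = 1 → ∃ w ∈ W, ‖x - w‖ ≤ ε) (hW : ∀ w ∈ W, ‖A w‖ ≤ b) :
    ‖A‖ ≤ b / (1 - ε) := by
  have h : ‖A‖ ≤ b + ε * ‖A‖ := by
    refine A.opNorm_le_of_unit_norm (by positivity) fun x hx => ?_
    obtain ⟨w, hw, hxw⟩ := hnet x hx
    calc ‖A x‖ = ‖A w + A (x - w)‖ := by rw [map_sub, add_sub_cancel]
      _ ≤ ‖A w‖ + ‖A‖ * ‖x - w‖ := norm_add_le_of_le le_rfl (A.le_opNorm _)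
      _ ≤ b + ε * ‖A‖ := by rw [mul_comm ε]; gcongr; exact hW w hw
  rw [le_div_iff₀ (by linarith)]
  linarith

theorem mul_norm_le_norm_apply_of_net {a : ℝ} (ha : 0 ≤ a)
    (hnet : ∀ x, ‖x‖ = 1 → ∃ w ∈ W, ‖x - w‖ ≤ ε) (hW : ∀ w ∈ W, a * ‖w‖ ≤ ‖A w‖) (x : E) :
    (a * (1 - ε) - ε * ‖A‖) * ‖x‖ ≤ ‖A x‖ := by
  have hunit : ∀ u, ‖u‖ = 1 → a * (1 - ε) - ε * ‖A‖ ≤ ‖A u‖ := by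
    intro u hu
    obtain ⟨w, hw, huw⟩ := hnet u hu
    have hw_norm : 1 - ε ≤ ‖w‖ := by linarith [norm_sub_norm_le u w]
    calc a * (1 - ε) - ε * ‖A‖ ≤ a * ‖w‖ - ‖A‖ * ‖u - w‖ := by
          rw [mul_comm ε]; gcongr
      _ ≤ ‖A w‖ - ‖A (w - u)‖ := by
          rw [← norm_neg (u - w), neg_sub]; gcongr; exacts [hW w hw, A.le_opNorm _]
      _ ≤ ‖A u‖ := by rw [map_sub]; linarith [norm_sub_norm_le (A w) (A u)]
  rcases eq_or_ne x 0 with rfl | hx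
  · simp
  · have hx' : 0 < ‖x‖ := norm_pos_iff.2 hx
    have h := hunit (‖x‖⁻¹ • x) (by rw [norm_smul, norm_inv, norm_norm, inv_mul_cancel₀ hx'.ne'])
    rwa [map_smul, norm_smul, norm_inv, norm_norm, le_inv_mul_iff₀ hx', mul_comm] at h

theorem norm_apply_bounds_of_net (V : Submodule ℝ E) {a b d : ℝ} (hε0 : 0 ≤ ε) (hε1 : ε < 1)
    (ha : 0 ≤ a) (hb : 0 ≤ b) (hbd : b ≤ d * (1 - ε)) (hWV : W ⊆ V)
    (hnet : ∀ x ∈ V, ‖x‖ = 1 → ∃ w ∈ W, ‖x - w‖ ≤ ε)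
    (hlo : ∀ w ∈ W, a * ‖w‖ ≤ ‖A w‖) (hup : ∀ w ∈ W, ‖A w‖ ≤ b) {x : E} (hx : x ∈ V) :
    (a * (1 - ε) - ε * d) * ‖x‖ ≤ ‖A x‖ ∧ ‖A x‖ ≤ d * ‖x‖ := by
  set AV := A.comp V.subtypeL
  set WV : Set V := V.subtype ⁻¹' W
  have hnetV : ∀ x : V, ‖x‖ = 1 → ∃ w ∈ WV, ‖x - w‖ ≤ ε := fun x hx => by
    obtain ⟨w, hw, hxw⟩ := hnet x x.2 hx
    exact ⟨⟨w, hWV hw⟩, hw, hxw⟩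
  have hd : 0 ≤ d := nonneg_of_mul_nonneg_left (hb.trans hbd) (by linarith)
  have hAV : ‖AV‖ ≤ d := (AV.opNorm_le_of_net hε0 hε1 hb hnetV fun w hw => hup w hw).trans
    (div_le_of_le_mul₀ (by linarith) hd hbd)
  constructor
  · calc (a * (1 - ε) - ε * d) * ‖x‖ ≤ (a * (1 - ε) - ε * ‖AV‖) * ‖x‖ := by gcongr
      _ ≤ ‖A x‖ := AV.mul_norm_le_norm_apply_of_net ha hnetV (fun w hw => hlo w hw) ⟨x, hx⟩
  · calc ‖A x‖ ≤ ‖AV‖ * ‖x‖ := AV.le_opNorm ⟨x, hx⟩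
      _ ≤ d * ‖x‖ := by gcongr

end ContinuousLinearMap

lemma div_sqrt_two_le {δ : ℝ} (hδ : 0 ≤ δ) : δ / √2 ≤ 5 / 7 * δ := by
  have h : 7 / 5 ≤ √2 := Real.le_sqrt_of_sq_le (by norm_num)
  rw [div_le_iff₀ (by positivity)]
  nlinarith

lemma sqrt_one_add_div_sqrt_two_le {δ : ℝ} (hδ0 : 0 ≤ δ) (hδ1 : δ ≤ 1) :
    √(1 + δ / √2) ≤ √(1 + δ) * (1 - δ / 14) := by
  rw [Real.sqrt_le_left (mul_nonneg (Real.sqrt_nonneg _) (by linarith)), mul_pow,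
    Real.sq_sqrt (by linarith)]
  nlinarith [div_sqrt_two_le hδ0, mul_nonneg hδ0 hδ0, mul_nonneg (mul_nonneg hδ0 hδ0) hδ0]

lemma sqrt_one_sub_le {δ : ℝ} (hδ0 : 0 ≤ δ) (hδ1 : δ ≤ 1) :
    √(1 - δ) ≤ √(1 - δ / √2) * (1 - δ / 14) - δ / 14 * √(1 + δ) := by
  set a := √(1 - δ / √2)
  set c := √(1 - δ)
  set d := √(1 + δ)
  have hδ' := div_sqrt_two_le hδ0
  have ha2 : a ^ 2 = 1 - δ / √2 := Real.sq_sqrt (by linarith)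
  have hc2 : c ^ 2 = 1 - δ := Real.sq_sqrt (by linarith)
  have ha1 : a ≤ 1 := Real.sqrt_le_one.2 (by linarith [div_nonneg hδ0 (Real.sqrt_nonneg 2)])
  have hc : c ≤ 1 - δ / 2 := Real.sqrt_le_iff.2 ⟨by linarith, by nlinarith⟩
  have hd : d ≤ 1 + δ / 2 := Real.sqrt_le_iff.2 ⟨by linarith, by nlinarith⟩
  have hsum : (a + d) * (a + c) ≤ 4 := by
    nlinarith [Real.sqrt_nonneg (1 - δ / √2), Real.sqrt_nonneg (1 - δ)]
  -- `a - c ≥ δ/14 (a + d)` since `a² - c² = (1 - 1/√2) δ ≥ 4δ/14` and `(a + d)(a + c) ≤ 4`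
  have hdiff : δ / 14 * (a + d) * (a + c) ≤ (a - c) * (a + c) := by nlinarith
  have ha : 0 < a := Real.sqrt_pos.2 (by linarith)
  have hdiff' := le_of_mul_le_mul_right hdiff (by positivity)
  linarith

namespace EuclideanSpace

variable {ι : Type*}

def supportedOn (T : Set ι) : Submodule ℝ (EuclideanSpace ℝ ι) where
  carrier := {x | ∀ i ∉ T, x i = 0}
  add_mem' hx hy i hi := by simp [hx i hi, hy i hi]
  zero_mem' _ _ := rfl
  smul_mem' c x hx i hi := by simp [hx i hi]

theorem norm_toLp_two [Fintype ι] (s : ι → ℝ) : ‖WithLp.toLp 2 s‖ = √(∑ i, s i ^ 2) := by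
  simp [EuclideanSpace.norm_eq, Real.norm_eq_abs, sq_abs]

end EuclideanSpace

open EuclideanSpace (supportedOn norm_toLp_two)

theorem Matrix.sum_mulVec_sq_bounds_of_net {ι κ : Type*} [Fintype ι] [DecidableEq ι] [Fintype κ]
    (Θ : Matrix κ ι ℝ) (T : Set ι) (W : Set (ι → ℝ)) {a b c d ε : ℝ}
    (hε0 : 0 ≤ ε) (hε1 : ε < 1) (hb : 0 ≤ b) (hc : 0 ≤ c)
    (hbd : √b ≤ d * (1 - ε)) (hcd : c ≤ √a * (1 - ε) - ε * d)
    (hWball : ∀ w ∈ W, (∀ i ∉ T, w i = 0) ∧ ∑ i, w i ^ 2 ≤ 1)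
    (hWnet : ∀ s : ι → ℝ, (∀ i ∉ T, s i = 0) → ∑ i, s i ^ 2 = 1 →
      ∃ w ∈ W, √(∑ i, (s i - w i) ^ 2) ≤ ε)
    (hWbound : ∀ w ∈ W, a * ∑ i, w i ^ 2 ≤ ∑ i, (Θ *ᵥ w) i ^ 2 ∧
      ∑ i, (Θ *ᵥ w) i ^ 2 ≤ b * ∑ i, w i ^ 2)
    (s : ι → ℝ) (hs : ∀ i ∉ T, s i = 0) :
    c ^ 2 * ∑ i, s i ^ 2 ≤ ∑ i, (Θ *ᵥ s) i ^ 2 ∧ ∑ i, (Θ *ᵥ s) i ^ 2 ≤ d ^ 2 * ∑ i, s i ^ 2 := by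
  set A := (toLpLin 2 2 Θ).toContinuousLinearMap
  have hA : ∀ s, ‖A (WithLp.toLp 2 s)‖ = √(∑ i, (Θ *ᵥ s) i ^ 2) := fun s => norm_toLp_two _
  have hnet : ∀ x ∈ supportedOn T, ‖x‖ = 1 → ∃ w ∈ WithLp.toLp 2 '' W, ‖x - w‖ ≤ ε := by
    rintro ⟨s⟩ hs hs1
    rw [norm_toLp_two, Real.sqrt_eq_one] at hs1
    obtain ⟨w, hw, hsw⟩ := hWnet s hs hs1
    exact ⟨_, ⟨w, hw, rfl⟩, by rwa [← WithLp.toLp_sub, norm_toLp_two]⟩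
  have hlo : ∀ w ∈ WithLp.toLp 2 '' W, √a * ‖w‖ ≤ ‖A w‖ := by
    rintro _ ⟨w, hw, rfl⟩
    rw [hA, norm_toLp_two, ← Real.sqrt_mul' _ (by positivity)]
    exact Real.sqrt_le_sqrt (hWbound w hw).1
  have hup : ∀ w ∈ WithLp.toLp 2 '' W, ‖A w‖ ≤ √b := by
    rintro _ ⟨w, hw, rfl⟩
    rw [hA]
    exact Real.sqrt_le_sqrt ((hWbound w hw).2.trans (mul_le_of_le_one_right hb (hWball w hw).2))
  have hWV : WithLp.toLp 2 '' W ⊆ supportedOn T := by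
    rintro _ ⟨w, hw, rfl⟩
    exact (hWball w hw).1
  obtain ⟨hl, hu⟩ := A.norm_apply_bounds_of_net (supportedOn T) hε0 hε1 (Real.sqrt_nonneg _)
    (Real.sqrt_nonneg _) hbd hWV hnet hlo hup (x := WithLp.toLp 2 s) hs
  rw [hA, norm_toLp_two] at hl hu
  have hd : 0 ≤ d := nonneg_of_mul_nonneg_left ((Real.sqrt_nonneg b).trans hbd) (by linarith)
  have hsum : √(∑ i, s i ^ 2) ^ 2 = ∑ i, s i ^ 2 := Real.sq_sqrt (by positivity)
  have hΘsum : √(∑ i, (Θ *ᵥ s) i ^ 2) ^ 2 = ∑ i, (Θ *ᵥ s) i ^ 2 := Real.sq_sqrt (by positivity)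
  constructor
  · have h := pow_le_pow_left₀ (by positivity)
      ((mul_le_mul_of_nonneg_right hcd (Real.sqrt_nonneg _)).trans hl) 2
    rwa [mul_pow, hsum, hΘsum] at h
  · have h := pow_le_pow_left₀ (Real.sqrt_nonneg _) hu 2
    rwa [mul_pow, hsum, hΘsum] at h

theorem stmt7_general {m n : ℕ} (δ : ℝ) (hδ : δ ∈ Set.Ioo (0 : ℝ) 1)
    (Θ : Matrix (Fin m) (Fin n) ℝ)
    (T : Finset (Fin n))
    (W : Finset (Fin n → ℝ))
    (hWball : ∀ w ∈ W, (∀ i ∉ T, w i = 0) ∧ (∑ i, w i ^ 2) ≤ 1)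
    (hWnet : ∀ s : Fin n → ℝ, (∀ i ∉ T, s i = 0) → (∑ i, s i ^ 2) = 1 →
      ∃ w ∈ W, Real.sqrt (∑ i, (s i - w i) ^ 2) ≤ δ / 14)
    (hWbound : ∀ w ∈ W,
      (1 - δ / Real.sqrt 2) * (∑ i, w i ^ 2) ≤ (∑ i, (Θ *ᵥ w) i ^ 2) ∧
      (∑ i, (Θ *ᵥ w) i ^ 2) ≤ (1 + δ / Real.sqrt 2) * (∑ i, w i ^ 2)) :
    ∀ s : Fin n → ℝ, (∀ i ∉ T, s i = 0) →
      (1 - δ) * (∑ i, s i ^ 2) ≤ (∑ i, (Θ *ᵥ s) i ^ 2) ∧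
      (∑ i, (Θ *ᵥ s) i ^ 2) ≤ (1 + δ) * (∑ i, s i ^ 2) := by
  obtain ⟨hδ0, hδ1⟩ := hδ
  intro s hs
  have h := Θ.sum_mulVec_sq_bounds_of_net T W (by positivity) (by linarith)
    (by positivity) (Real.sqrt_nonneg _)
    (sqrt_one_add_div_sqrt_two_le hδ0.le hδ1.le) (sqrt_one_sub_le hδ0.le hδ1.le)
    hWball hWnet hWbound s hs
  rwa [Real.sq_sqrt (by linarith), Real.sq_sqrt (by linarith)] at h

/-- net-extension step. If `W` is a `(δ/14)`-net of the unit ball of the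
coordinate subspace `ℝ^T` (`|T| = k`) and `(1 − δ/√2)‖w‖² ≤ ‖Θw‖² ≤ (1 + δ/√2)‖w‖²` for
all `w ∈ W`, then `(1−δ)‖s‖² ≤ ‖Θs‖² ≤ (1+δ)‖s‖²` for all `s` supported on `T`. -/
theorem stmt7 {m n k : ℕ} (δ : ℝ) (hδ : δ ∈ Set.Ioo (0 : ℝ) 1)
    (Θ : Matrix (Fin m) (Fin n) ℝ)
    (T : Finset (Fin n)) (hT : T.card = k)
    (W : Finset (Fin n → ℝ))
    (hWball : ∀ w ∈ W, (∀ i ∉ T, w i = 0) ∧ (∑ i, w i ^ 2) ≤ 1)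
    (hWnet : ∀ s : Fin n → ℝ, (∀ i ∉ T, s i = 0) → (∑ i, s i ^ 2) = 1 →
      ∃ w ∈ W, Real.sqrt (∑ i, (s i - w i) ^ 2) ≤ δ / 14)
    (hWbound : ∀ w ∈ W,
      (1 - δ / Real.sqrt 2) * (∑ i, w i ^ 2) ≤ (∑ i, (Θ *ᵥ w) i ^ 2) ∧
      (∑ i, (Θ *ᵥ w) i ^ 2) ≤ (1 + δ / Real.sqrt 2) * (∑ i, w i ^ 2)) :
    ∀ s : Fin n → ℝ, (∀ i ∉ T, s i = 0) →
      (1 - δ) * (∑ i, s i ^ 2) ≤ (∑ i, (Θ *ᵥ s) i ^ 2) ∧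
      (∑ i, (Θ *ᵥ s) i ^ 2) ≤ (1 + δ) * (∑ i, s i ^ 2) :=
  stmt7_general δ hδ Θ T W hWball hWnet hWbound
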